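/- arXiv:2511.17328 — 2 statements merged into one kernel-verified Lean document; each statement's English description precedes it below -/
import Mathlib

section
/- Fix τ > 0, c > 0 and γ > 0. Then g(τ,c,ε) → (1/(1+γ))·(γ + e^{−(1+γ)τ/c}) − φ_f(c) as ε → 0⁺. -/
open MeasureTheory Real Filter Set Topology

noncomputable def om1 (γ ε : ℝ) : ℝ := (1 + γ * ε + Real.sqrt ((1 - γ * ε) ^ 2 - 4 * ε)) / 2

noncomputable def om2 (γ ε : ℝ) : ℝ := (1 + γ * ε - Real.sqrt ((1 - γ * ε) ^ 2 - 4 * ε)) / 2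

noncomputable def Cx (γ x c ε : ℝ) : ℝ :=
  (1 / (c * (om1 γ ε - om2 γ ε))) *
    ((1 - om2 γ ε) * Real.exp (om1 γ ε * x / c) - (1 - om1 γ ε) * Real.exp (om2 γ ε * x / c))

/-- Pulse speed index function `g(τ,c,ε) = U(τ/ε)`. -/
noncomputable def gg (K : ℝ → ℝ) (γ τ c ε : ℝ) : ℝ :=
  ∫ x in Iio (τ / ε), Cx γ (x - τ / ε) c ε * ∫ y in (x - τ / ε)..x, K y

/-- Front speed index function. -/
noncomputable def phiF (K : ℝ → ℝ) (c : ℝ) : ℝ :=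
  (∫ x in Iio (0:ℝ), K x) - ∫ x in Iio (0:ℝ), Real.exp (x / c) * K x

/-! After the shift `u = x - τ/ε`, the kernel `C_x` splits into the two exponentials
`e^{ω₁ u/c}` and `e^{ω₂ u/c}`. As `ε → 0⁺` we have `ω₁ → 1`, and Vieta's relations
`ω₁ ω₂ = (1 + γ) ε`, `(1 - ω₁)(1 - ω₂) = ε` give `ω₂/ε → 1 + γ` and `(1 - ω₁)/ε → 1`.
By dominated convergence the first part tends to `(1/c) ∫_{u<0} e^{u/c} ∫_u^∞ K`, which an
integration by parts turns into `1 - φ_f(c)`. After rescaling `u = v/ε`, the second part tends to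
`(1/c) ∫_{-τ}^0 e^{(1+γ)v/c} dv`: the window `[v/ε, (v+τ)/ε]` sweeps out all of `ℝ` when
`-τ < v < 0` and escapes to `-∞` when `v < -τ`. -/

lemma om1_add_om2 (γ ε : ℝ) : om1 γ ε + om2 γ ε = 1 + γ * ε := by
  unfold om1 om2; ring

lemma om1_mul_om2 {γ ε : ℝ} (hD : 0 ≤ (1 - γ * ε) ^ 2 - 4 * ε) :
    om1 γ ε * om2 γ ε = (1 + γ) * ε := by
  unfold om1 om2
  linear_combination (-1 / 4 : ℝ) * Real.sq_sqrt hD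

lemma one_sub_om1_mul_one_sub_om2 {γ ε : ℝ} (hD : 0 ≤ (1 - γ * ε) ^ 2 - 4 * ε) :
    (1 - om1 γ ε) * (1 - om2 γ ε) = ε := by
  linear_combination om1_mul_om2 hD - om1_add_om2 γ ε

lemma continuous_om1 (γ : ℝ) : Continuous (om1 γ) := by
  unfold om1; fun_prop

lemma continuous_om2 (γ : ℝ) : Continuous (om2 γ) := by
  unfold om2; fun_prop

lemma tendsto_om1 (γ : ℝ) : Tendsto (om1 γ) (𝓝 0) (𝓝 1) := by
  simpa [om1] using (continuous_om1 γ).tendsto 0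

lemma tendsto_om2 (γ : ℝ) : Tendsto (om2 γ) (𝓝 0) (𝓝 0) := by
  simpa [om2] using (continuous_om2 γ).tendsto 0

lemma eventually_discriminant_nonneg (γ : ℝ) : ∀ᶠ ε in 𝓝 0, 0 ≤ (1 - γ * ε) ^ 2 - 4 * ε := by
  have : Tendsto (fun ε : ℝ => (1 - γ * ε) ^ 2 - 4 * ε) (𝓝 0) (𝓝 1) := by
    simpa using ((by fun_prop : Continuous fun ε : ℝ => (1 - γ * ε) ^ 2 - 4 * ε).tendsto 0)
  exact this.eventually (eventually_ge_nhds zero_lt_one)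

lemma tendsto_om2_div (γ : ℝ) :
    Tendsto (fun ε => om2 γ ε / ε) (𝓝[>] 0) (𝓝 (1 + γ)) := by
  have h : Tendsto (fun ε => (1 + γ) * (om1 γ ε)⁻¹) (𝓝 0) (𝓝 (1 + γ)) := by
    simpa using ((tendsto_om1 γ).inv₀ one_ne_zero).const_mul (1 + γ)
  refine (h.mono_left nhdsWithin_le_nhds).congr' ?_
  filter_upwards [self_mem_nhdsWithin, nhdsWithin_le_nhds (eventually_discriminant_nonneg γ),
    nhdsWithin_le_nhds ((tendsto_om1 γ).eventually_ne one_ne_zero)] with ε hε hD h1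
  rw [← div_eq_mul_inv, div_eq_div_iff h1 (ne_of_gt hε)]
  linear_combination -om1_mul_om2 hD

lemma tendsto_one_sub_om1_div (γ : ℝ) :
    Tendsto (fun ε => (1 - om1 γ ε) / ε) (𝓝[>] 0) (𝓝 1) := by
  have h2 : Tendsto (fun ε => 1 - om2 γ ε) (𝓝 0) (𝓝 1) := by
    simpa using (tendsto_om2 γ).const_sub 1
  have h : Tendsto (fun ε => (1 - om2 γ ε)⁻¹) (𝓝 0) (𝓝 1) := by
    simpa using h2.inv₀ one_ne_zero
  refine (h.mono_left nhdsWithin_le_nhds).congr' ?_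
  filter_upwards [self_mem_nhdsWithin, nhdsWithin_le_nhds (eventually_discriminant_nonneg γ),
    nhdsWithin_le_nhds (h2.eventually_ne one_ne_zero)] with ε hε hD h1
  rw [inv_eq_one_div, div_eq_div_iff h1 (ne_of_gt hε)]
  linear_combination -one_sub_om1_mul_one_sub_om2 hD

lemma eventually_om_pos {γ : ℝ} (hγ : -1 < γ) :
    ∀ᶠ ε in 𝓝[>] 0, 0 < ε ∧ 0 < om1 γ ε ∧ 0 < om2 γ ε := by
  filter_upwards [self_mem_nhdsWithin,
    nhdsWithin_le_nhds ((tendsto_om1 γ).eventually (eventually_gt_nhds one_pos)),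
    (tendsto_om2_div γ).eventually (eventually_gt_nhds (neg_lt_iff_pos_add'.1 hγ))]
    with ε (hε : 0 < ε) h₁ h₂
  exact ⟨hε, h₁, (div_pos_iff_of_pos_right hε).1 h₂⟩

lemma integrable_exp_neg_mul_abs {ρ : ℝ} (hρ : 0 < ρ) :
    Integrable fun x : ℝ => exp (-ρ * |x|) := by
  rw [← integrableOn_univ, ← Iic_union_Ioi (a := 0)]
  refine IntegrableOn.union ?_ ?_
  · refine (integrableOn_exp_mul_Iic hρ 0).congr_fun (fun x hx => ?_) measurableSet_Iic
    rw [abs_of_nonpos hx, mul_neg, neg_mul, neg_neg]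
  · refine (integrableOn_exp_mul_Ioi (neg_neg_of_pos hρ) 0).congr_fun (fun x hx => ?_)
      measurableSet_Ioi
    rw [abs_of_pos hx]

lemma integrable_of_abs_le_exp_neg_mul_abs {K : ℝ → ℝ} (hK : AEStronglyMeasurable K)
    {α ρ : ℝ} (hρ : 0 < ρ) (hbound : ∀ x, |K x| ≤ α * exp (-ρ * |x|)) : Integrable K :=
  ((integrable_exp_neg_mul_abs hρ).const_mul α).mono' hK (ae_of_all _ hbound)

section Window

variable {K : ℝ → ℝ} {τ : ℝ}

lemma abs_intervalIntegral_le_integral_abs (hK : Integrable K) (a b : ℝ) :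
    |∫ y in a..b, K y| ≤ ∫ y, |K y| :=
  (intervalIntegral.norm_integral_le_integral_norm_uIoc).trans
    (setIntegral_le_integral hK.norm (ae_of_all _ fun _ => norm_nonneg _))

lemma continuous_intervalIntegral_comp (hK : Integrable K) {lo hi : ℝ → ℝ}
    (hlo : Continuous lo) (hhi : Continuous hi) :
    Continuous fun u => ∫ y in lo u..hi u, K y :=
  (((hK.continuous_primitive 0).comp hhi).sub ((hK.continuous_primitive 0).comp hlo)).congr
    fun _ => intervalIntegral.integral_interval_sub_left hK.intervalIntegrable
      hK.intervalIntegrable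

lemma tendsto_intervalIntegral_of_tendsto_atBot (hK : Integrable K) {ι : Type*}
    {l : Filter ι} [l.IsCountablyGenerated] {lo hi : ι → ℝ} (hlo : Tendsto lo l atBot)
    (hhi : Tendsto hi l atBot) :
    Tendsto (fun i => ∫ y in lo i..hi i, K y) l (𝓝 0) := by
  have h := (intervalIntegral_tendsto_integral_Iic 0 hK.integrableOn hlo).sub
    (intervalIntegral_tendsto_integral_Iic 0 hK.integrableOn hhi)
  rw [sub_self] at h
  exact h.congr fun _ => sub_eq_of_eq_add
    (intervalIntegral.integral_add_adjacent_intervals hK.intervalIntegrable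
      hK.intervalIntegrable).symm

lemma tendsto_div_nhdsGT_zero_atTop (hτ : 0 < τ) :
    Tendsto (fun ε => τ / ε) (𝓝[>] 0) atTop := by
  simpa only [div_eq_mul_inv] using tendsto_inv_nhdsGT_zero.const_mul_atTop hτ

lemma tendsto_div_nhdsGT_zero_atBot {v : ℝ} (hv : v < 0) :
    Tendsto (fun ε => v / ε) (𝓝[>] 0) atBot := by
  simpa only [div_eq_mul_inv] using tendsto_inv_nhdsGT_zero.const_mul_atTop_of_neg hv

lemma tendsto_intervalIntegral_add_div (hK : Integrable K) (hτ : 0 < τ) (u : ℝ) :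
    Tendsto (fun ε => ∫ y in u..u + τ / ε, K y) (𝓝[>] 0) (𝓝 (∫ y in Ioi u, K y)) :=
  intervalIntegral_tendsto_integral_Ioi u hK.integrableOn
    (tendsto_atTop_add_const_left _ u (tendsto_div_nhdsGT_zero_atTop hτ))

lemma tendsto_intervalIntegral_div_add_div (hK : Integrable K) {v : ℝ} (hv : v < 0)
    (hvτ : v ≠ -τ) :
    Tendsto (fun ε => ∫ y in v / ε..v / ε + τ / ε, K y) (𝓝[>] 0)
      (𝓝 ((Ioi (-τ)).indicator (fun _ => ∫ y, K y) v)) := by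
  have hlo := tendsto_div_nhdsGT_zero_atBot hv
  simp_rw [← add_div]
  rcases hvτ.lt_or_gt with hlt | hgt
  · rw [indicator_of_notMem (show v ∉ Ioi (-τ) from not_lt.2 hlt.le)]
    exact tendsto_intervalIntegral_of_tendsto_atBot hK hlo
      (tendsto_div_nhdsGT_zero_atBot (by linarith))
  · rw [indicator_of_mem (show v ∈ Ioi (-τ) from hgt)]
    exact intervalIntegral_tendsto_integral hK hlo
      (tendsto_div_nhdsGT_zero_atTop (by linarith))

end Window

lemma integrableOn_Iio_exp_mul_mul {k M : ℝ} (hk : 0 < k) {h : ℝ → ℝ}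
    (hh : AEStronglyMeasurable h (volume.restrict (Iio 0))) (hM : ∀ u, |h u| ≤ M) :
    IntegrableOn (fun u => exp (k * u) * h u) (Iio 0) :=
  ((integrableOn_exp_mul_Iic hk 0).mono_set Iio_subset_Iic_self).mul_bdd hh (ae_of_all _ hM)

lemma tendsto_setIntegral_Iio_exp_mul {ι : Type*} {l : Filter ι} [l.IsCountablyGenerated]
    {a : ι → ℝ} {a₀ M : ℝ} {h : ι → ℝ → ℝ} {h₀ : ℝ → ℝ}
    (ha₀ : 0 < a₀) (ha : Tendsto a l (𝓝 a₀))
    (hmeas : ∀ᶠ i in l, AEStronglyMeasurable (h i) (volume.restrict (Iio 0)))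
    (hM : ∀ᶠ i in l, ∀ u, |h i u| ≤ M)
    (hlim : ∀ᵐ u ∂volume.restrict (Iio 0), Tendsto (fun i => h i u) l (𝓝 (h₀ u))) :
    Tendsto (fun i => ∫ u in Iio 0, exp (a i * u) * h i u) l
      (𝓝 (∫ u in Iio 0, exp (a₀ * u) * h₀ u)) := by
  refine tendsto_integral_filter_of_dominated_convergence (fun u => M * exp (a₀ / 2 * u)) ?_ ?_
    (((integrableOn_exp_mul_Iic (half_pos ha₀) 0).mono_set Iio_subset_Iic_self).const_mul M) ?_
  · filter_upwards [hmeas] with i hi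
    exact (Continuous.aestronglyMeasurable (by fun_prop)).mul hi
  · filter_upwards [hM, ha.eventually (eventually_ge_nhds (half_lt_self ha₀))] with i hi hai
    filter_upwards [ae_restrict_mem measurableSet_Iio] with u hu
    rw [norm_mul, Real.norm_eq_abs, Real.norm_eq_abs, abs_exp, mul_comm]
    exact mul_le_mul (hi u) (exp_le_exp.2 (mul_le_mul_of_nonpos_right hai (le_of_lt hu)))
      (exp_pos _).le ((abs_nonneg _).trans (hi u))
  · filter_upwards [hlim] with u hu
    exact ((continuous_exp.tendsto _).comp (ha.mul_const u)).mul hu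

lemma setIntegral_Iio_comp_sub (f : ℝ → ℝ) (T : ℝ) :
    ∫ x in Iio T, f (x - T) = ∫ u in Iio 0, f u := by
  rw [← integral_indicator measurableSet_Iio, ← integral_indicator measurableSet_Iio,
    ← integral_sub_right_eq_self ((Iio 0).indicator f) T]
  congr 1 with x
  simp only [indicator_apply, mem_Iio, sub_neg]

lemma setIntegral_Iio_zero_comp_div (f : ℝ → ℝ) {ε : ℝ} (hε : 0 < ε) :
    ∫ u in Iio 0, f u = ε⁻¹ * ∫ v in Iio 0, f (v / ε) := by
  have h := Measure.setIntegral_comp_smul_of_pos volume f (Iio 0) (inv_pos.2 hε)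
  simp only [LinearOrderedField.smul_Iio (inv_pos.2 hε), mul_zero, Module.finrank_self,
    pow_one, inv_inv, smul_eq_mul] at h
  simp_rw [div_eq_inv_mul, h, ← mul_assoc, inv_mul_cancel₀ hε.ne', one_mul]

lemma integral_Iio_exp_mul_indicator_Ioi {k τ : ℝ} (hk : 0 < k) (hτ : 0 ≤ τ) (C : ℝ) :
    ∫ v in Iio 0, exp (k * v) * (Ioi (-τ)).indicator (fun _ => C) v
      = C * (1 - exp (-(k * τ))) / k := by
  have hexp : IntegrableOn (fun v => exp (k * v)) (Iic 0) := integrableOn_exp_mul_Iic hk 0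
  have h : ∀ v, exp (k * v) * (Ioi (-τ)).indicator (fun _ => C) v
      = (Ioi (-τ)).indicator (fun v => exp (k * v) * C) v := fun v =>
    (indicator_mul_right _ (fun v => exp (k * v)) _).symm
  simp_rw [h]
  rw [integral_indicator measurableSet_Ioi, Measure.restrict_restrict measurableSet_Ioi,
    Ioi_inter_Iio, integral_mul_const, ← integral_Ioc_eq_integral_Ioo,
    ← intervalIntegral.integral_of_le (neg_nonpos.2 hτ),
    ← intervalIntegral.integral_Iic_sub_Iic
      (hexp.mono_set (Iic_subset_Iic.2 (neg_nonpos.2 hτ))) hexp,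
    integral_exp_mul_Iic hk, integral_exp_mul_Iic hk]
  simp only [mul_zero, exp_zero, mul_neg]
  field_simp

section Tail

variable {K : ℝ → ℝ}

lemma abs_integral_Ioi_le_integral_abs (hK : Integrable K) (u : ℝ) :
    |∫ y in Ioi u, K y| ≤ ∫ y, |K y| :=
  (norm_integral_le_integral_norm _).trans
    (setIntegral_le_integral hK.norm (ae_of_all _ fun _ => norm_nonneg _))

lemma hasDerivAt_integral_Ioi (hKc : Continuous K) (hK : Integrable K) (u : ℝ) :
    HasDerivAt (fun u => ∫ y in Ioi u, K y) (-K u) u := by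
  have h : HasDerivAt (fun u => (∫ y in Ioi 0, K y) - ∫ y in (0 : ℝ)..u, K y) (-K u) u := by
    simpa using (intervalIntegral.integral_hasDerivAt_right hK.intervalIntegrable
      (hKc.stronglyMeasurableAtFilter _ _) hKc.continuousAt).const_sub (∫ y in Ioi 0, K y)
  exact h.congr_of_eventuallyEq (Eventually.of_forall fun _ =>
    eq_sub_of_add_eq' (intervalIntegral.integral_interval_add_Ioi hK.integrableOn
      hK.integrableOn))

lemma integral_Iio_exp_mul_integral_Ioi (hKc : Continuous K) (hK : Integrable K) {k : ℝ}
    (hk : 0 < k) :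
    ∫ u in Iio 0, exp (k * u) * ∫ y in Ioi u, K y
      = k⁻¹ * ((∫ y in Ioi 0, K y) + ∫ u in Iio 0, exp (k * u) * K u) := by
  set Φ : ℝ → ℝ := fun u => ∫ y in Ioi u, K y
  have hΦ : ∀ u, |Φ u| ≤ ∫ y, |K y| := abs_integral_Ioi_le_integral_abs hK
  have hexp : IntegrableOn (fun u => exp (k * u)) (Iic 0) := integrableOn_exp_mul_Iic hk 0
  have hΦc : Continuous Φ :=
    continuous_iff_continuousAt.2 fun u => (hasDerivAt_integral_Ioi hKc hK u).continuousAt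
  have hint₁ : IntegrableOn (fun u => exp (k * u) * Φ u) (Iic 0) :=
    hexp.mul_bdd hΦc.aestronglyMeasurable (ae_of_all _ hΦ)
  have hint₂ : IntegrableOn (fun u => exp (k * u) * K u) (Iic 0) :=
    hK.integrableOn.bdd_mul (c := 1) (by fun_prop) <| by
      filter_upwards [ae_restrict_mem measurableSet_Iic] with u (hu : u ≤ 0)
      simpa [abs_exp] using mul_nonpos_of_nonneg_of_nonpos hk.le hu
  have hderiv : ∀ u ∈ Iic (0 : ℝ), HasDerivAt (fun u => k⁻¹ * (exp (k * u) * Φ u))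
      (exp (k * u) * Φ u - k⁻¹ * (exp (k * u) * K u)) u := by
    intro u _
    have hE : HasDerivAt (fun u => exp (k * u)) (exp (k * u) * k) u := by
      simpa using ((hasDerivAt_id u).const_mul k).exp
    refine ((hE.mul (hasDerivAt_integral_Ioi hKc hK u)).const_mul k⁻¹).congr_deriv ?_
    field_simp
    ring
  have hlim : Tendsto (fun u => k⁻¹ * (exp (k * u) * Φ u)) atBot (𝓝 0) := by
    simpa using ((tendsto_exp_atBot.comp (tendsto_id.const_mul_atBot hk))
      |>.zero_mul_isBoundedUnder_le (isBoundedUnder_of ⟨_, hΦ⟩)).const_mul k⁻¹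
  have h := integral_Iic_of_hasDerivAt_of_tendsto' hderiv (hint₁.sub (hint₂.const_mul _)) hlim
  rw [integral_sub hint₁ (hint₂.const_mul _), integral_const_mul, integral_Iic_eq_integral_Iio,
    integral_Iic_eq_integral_Iio] at h
  simp only [mul_zero, exp_zero, one_mul, sub_zero] at h
  linear_combination h

end Tail

section SpeedIndex
variable {K : ℝ → ℝ} {γ τ c ε : ℝ}

lemma gg_eq (hK : Integrable K) (hc : 0 < c) (hε : 0 < ε) (h₁ : 0 < om1 γ ε)
    (h₂ : 0 < om2 γ ε) :
    gg K γ τ c ε =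
      (1 - om2 γ ε) / (c * (om1 γ ε - om2 γ ε)) *
          (∫ u in Iio 0, exp (om1 γ ε / c * u) * ∫ y in u..u + τ / ε, K y) -
        (1 - om1 γ ε) / ε / (c * (om1 γ ε - om2 γ ε)) *
          ∫ v in Iio 0, exp (om2 γ ε / ε / c * v) * ∫ y in v / ε..v / ε + τ / ε, K y := by
  set W : ℝ → ℝ := fun u => ∫ y in u..u + τ / ε, K y
  have hW : Continuous W :=
    continuous_intervalIntegral_comp hK continuous_id (continuous_id.add continuous_const)
  have hI : ∀ {k : ℝ}, 0 < k → IntegrableOn (fun u => exp (k * u) * W u) (Iio 0) := fun hk =>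
    integrableOn_Iio_exp_mul_mul hk hW.aestronglyMeasurable
      (fun _ => abs_intervalIntegral_le_integral_abs hK _ _)
  have hCx : ∀ u, Cx γ u c ε * W u =
      (1 - om2 γ ε) / (c * (om1 γ ε - om2 γ ε)) * (exp (om1 γ ε / c * u) * W u) -
        (1 - om1 γ ε) / (c * (om1 γ ε - om2 γ ε)) * (exp (om2 γ ε / c * u) * W u) := by
    intro u
    simp only [Cx, div_mul_eq_mul_div]
    ring
  have hscale : ∀ v, exp (om2 γ ε / c * (v / ε)) * W (v / ε)
      = exp (om2 γ ε / ε / c * v) * ∫ y in v / ε..v / ε + τ / ε, K y := by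
    intro v
    congr 2
    ring
  calc gg K γ τ c ε = ∫ u in Iio 0, Cx γ u c ε * W u := by
        rw [gg, ← setIntegral_Iio_comp_sub (fun u => Cx γ u c ε * W u) (τ / ε)]
        simp only [W, sub_add_cancel]
    _ = _ := by
        simp_rw [hCx]
        rw [integral_sub ((hI (div_pos h₁ hc)).const_mul _) ((hI (div_pos h₂ hc)).const_mul _),
          integral_const_mul, integral_const_mul,
          setIntegral_Iio_zero_comp_div (fun u => exp (om2 γ ε / c * u) * W u) hε]
        simp_rw [hscale]
        ring

lemma tendsto_integral_exp_om1_mul (hK : Integrable K) (hτ : 0 < τ) (hc : 0 < c) :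
    Tendsto (fun ε => ∫ u in Iio 0, exp (om1 γ ε / c * u) * ∫ y in u..u + τ / ε, K y)
      (𝓝[>] 0) (𝓝 (∫ u in Iio 0, exp (c⁻¹ * u) * ∫ y in Ioi u, K y)) := by
  refine tendsto_setIntegral_Iio_exp_mul (inv_pos.2 hc) ?_
    (Eventually.of_forall fun _ => (continuous_intervalIntegral_comp hK continuous_id
      (continuous_id.add continuous_const)).aestronglyMeasurable)
    (Eventually.of_forall fun _ _ => abs_intervalIntegral_le_integral_abs hK _ _)
    (ae_of_all _ fun u => tendsto_intervalIntegral_add_div hK hτ u)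
  simpa [div_eq_inv_mul] using ((tendsto_om1 γ).mono_left nhdsWithin_le_nhds).div_const c

lemma tendsto_integral_exp_om2_mul (hK : Integrable K) (hτ : 0 < τ) (hc : 0 < c)
    (hγ : -1 < γ) :
    Tendsto (fun ε => ∫ v in Iio 0, exp (om2 γ ε / ε / c * v) *
        ∫ y in v / ε..v / ε + τ / ε, K y)
      (𝓝[>] 0) (𝓝 ((∫ y, K y) * (1 - exp (-((1 + γ) / c * τ))) / ((1 + γ) / c))) := by
  have hk : 0 < (1 + γ) / c := div_pos (by linarith) hc
  rw [← integral_Iio_exp_mul_indicator_Ioi hk hτ.le]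
  refine tendsto_setIntegral_Iio_exp_mul hk ((tendsto_om2_div γ).div_const c)
    (Eventually.of_forall fun ε => (continuous_intervalIntegral_comp hK
      (continuous_id.div_const ε) ((continuous_id.div_const ε).add continuous_const)
      ).aestronglyMeasurable)
    (Eventually.of_forall fun _ _ => abs_intervalIntegral_le_integral_abs hK _ _) ?_
  filter_upwards [ae_restrict_mem measurableSet_Iio, ae_restrict_of_ae (volume.ae_ne (-τ))]
    with v hv hvτ
  exact tendsto_intervalIntegral_div_add_div hK hv hvτ

lemma tendsto_gg (hKc : Continuous K) (hK : Integrable K) (hτ : 0 < τ) (hc : 0 < c)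
    (hγ : -1 < γ) :
    Tendsto (fun ε => gg K γ τ c ε) (𝓝[>] 0)
      (𝓝 ((∫ y in Ioi 0, K y) + (∫ u in Iio 0, exp (c⁻¹ * u) * K u) -
        (∫ y, K y) * (1 - exp (-((1 + γ) / c * τ))) / (1 + γ))) := by
  have hc' : c * (1 - 0) ≠ 0 := by simpa using hc.ne'
  have hden : Tendsto (fun ε => c * (om1 γ ε - om2 γ ε)) (𝓝[>] 0) (𝓝 (c * (1 - 0))) :=
    (((tendsto_om1 γ).sub (tendsto_om2 γ)).const_mul c).mono_left nhdsWithin_le_nhds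
  have hA := (((tendsto_om2 γ).mono_left nhdsWithin_le_nhds).const_sub 1).div hden hc'
  have hB := (tendsto_one_sub_om1_div γ).div hden hc'
  have h := (hA.mul (tendsto_integral_exp_om1_mul (γ := γ) hK hτ hc)).sub
    (hB.mul (tendsto_integral_exp_om2_mul hK hτ hc hγ))
  rw [integral_Iio_exp_mul_integral_Ioi hKc hK (inv_pos.2 hc)] at h
  refine (h.congr' ?_).trans (le_of_eq ?_)
  · filter_upwards [eventually_om_pos hγ] with ε ⟨hε, h₁, h₂⟩
    exact (gg_eq hK hc hε h₁ h₂).symm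
  · congr 1
    field_simp
    ring

end SpeedIndex

theorem statement6 (K : ℝ → ℝ)
    (hK : Continuous K)
    (hKdecay : ∃ α > (0:ℝ), ∃ ρ > (0:ℝ), ∀ x : ℝ, |K x| ≤ α * Real.exp (-ρ * |x|))
    (hKint : (∫ x : ℝ, K x) = 1)
    (τ c γ : ℝ) (hτ : 0 < τ) (hc : 0 < c) (hγ : 0 < γ) :
    Tendsto (fun ε => gg K γ τ c ε) (𝓝[>] (0:ℝ))
      (𝓝 ((1 / (1 + γ)) * (γ + Real.exp (-(1 + γ) * τ / c)) - phiF K c)) := by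
  obtain ⟨α, -, ρ, hρ, hbound⟩ := hKdecay
  have hKI := integrable_of_abs_le_exp_neg_mul_abs hK.aestronglyMeasurable hρ hbound
  have hK₀ : ∫ y in Ioi 0, K y = 1 - ∫ x in Iio 0, K x := by
    rw [← hKint, ← intervalIntegral.integral_Iio_add_Ici hKI.integrableOn hKI.integrableOn,
      integral_Ici_eq_integral_Ioi]
    ring
  convert tendsto_gg hK hKI hτ hc (by linarith : -1 < γ) using 2
  simp only [phiF, hK₀, hKint, inv_mul_eq_div]
  rw [show -((1 + γ) / c * τ) = -(1 + γ) * τ / c by ring]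
  field_simp
  ring
end

section
/- Fix τ > 0, c > 0 and γ > 0. For every sufficiently small ε > 0 the partial derivatives of f at (τ,c,ε) exist, and as ε → 0⁺: the partial derivative of f with respect to τ tends to 0; the partial derivative of f with respect to c tends to φ_f'(c) = (1/c²) ∫_{−∞}^0 x e^{x/c} K(x) dx; and the partial derivative of f with respect to ε tends to 2φ_f(c) − (1/c) ∫_{−∞}^0 |x|·(e^{x/c}+1)·K(x) dx. -/
open MeasureTheory Real Filter Set Topology

/-- Pulse speed index function `f(τ,c,ε)`. -/
noncomputable def ff (K : ℝ → ℝ) (γ τ c ε : ℝ) : ℝ :=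
  ∫ x in Iio (0:ℝ), Cx γ x c ε * ∫ y in (x - τ / ε)..x, K y

/-!
Write `F(x) = ∫_{-∞}^x K`, so that `f = ∫_{x<0} C_x(x,c,ε) (F(x) - F(x - τ/ε)) dx`. For `x ≤ 0`,
`C_x` is a sum of two terms `a_i(ε)/c · exp(ω_i(ε) x/c)` with `ω_i ≥ 0`, whose coefficients and
exponents are smooth in `ε` wherever `(1 - γε)² - 4ε > 0`, in particular on a compact interval
`[0, ε₀]`. Hence `C_x` and its `c`- and `ε`-derivatives are `O(1 + |x|)` uniformly in `ε ∈ [0, ε₀]`,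
while `F(x)` and `K(x - s)`, `s ≥ 0`, are `O(e^{ρx})` as `x → -∞`. So all three partial
derivatives may be taken under the integral sign, and their limits as `ε → 0⁺` follow by dominated
convergence: terms containing `K(x - τ/ε)` carry a factor `ε⁻ⁿ e^{-ρτ/ε} → 0`, and the others tend
to `∫_{x<0} ∂C_x(x,c,0) F(x) dx`. Since `C_x(x,c,0) = e^{x/c}/c`, one integration by parts turns
these into the stated limits.
-/

lemma abs_mul_le_of_abs_le {a b A B : ℝ} (ha : |a| ≤ A) (hb : |b| ≤ B) : |a * b| ≤ A * B :=
  (abs_mul a b).trans_le (mul_le_mul ha hb (abs_nonneg b) ((abs_nonneg a).trans ha))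

lemma abs_add_mul_le (p q x : ℝ) : |p + q * x| ≤ (|p| + |q|) * (1 + |x|) := by
  have := abs_add_le p (q * x)
  rw [abs_mul] at this
  nlinarith [abs_nonneg p, abs_nonneg q, abs_nonneg x]

lemma abs_mul_exp_div_le {c x : ℝ} (hc : 0 < c) (hx : x ≤ 0) (p : ℝ) : |p * exp (x / c)| ≤ |p| := by
  rw [abs_mul, abs_exp]
  exact mul_le_of_le_one_right (abs_nonneg p)
    (exp_le_one_iff.2 (div_nonpos_of_nonpos_of_nonneg hx hc.le))

section ExpWeight

variable {ρ : ℝ}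

lemma one_add_abs_mul_exp_le (hρ : 0 < ρ) {x : ℝ} (hx : x ≤ 0) :
    (1 + |x|) * exp (ρ * x) ≤ (1 + 2 / ρ) * exp (ρ / 2 * x) := by
  have hsplit : exp (ρ / 2 * x) = exp (-(ρ / 2 * x)) * exp (ρ * x) := by
    rw [← exp_add]; ring_nf
  have hlin : 1 + |x| ≤ (1 + 2 / ρ) * (-(ρ / 2 * x) + 1) := by
    rw [abs_of_nonpos hx]; field_simp; nlinarith [mul_nonneg (neg_nonneg.2 hx) (sq_nonneg ρ)]
  calc (1 + |x|) * exp (ρ * x) ≤ (1 + 2 / ρ) * (-(ρ / 2 * x) + 1) * exp (ρ * x) := by gcongr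
    _ ≤ (1 + 2 / ρ) * exp (-(ρ / 2 * x)) * exp (ρ * x) := by gcongr; exact add_one_le_exp _
    _ = (1 + 2 / ρ) * exp (ρ / 2 * x) := by rw [hsplit, mul_assoc]

lemma integrableOn_one_add_abs_mul_exp (hρ : 0 < ρ) :
    IntegrableOn (fun x => (1 + |x|) * exp (ρ * x)) (Iio 0) := by
  refine Integrable.mono' (((integrableOn_exp_mul_Iic (half_pos hρ) 0).mono_set
    Iio_subset_Iic_self).const_mul (1 + 2 / ρ)) (by fun_prop) ?_
  refine (ae_restrict_iff' measurableSet_Iio).2 (ae_of_all _ fun x hx => ?_)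
  rw [norm_of_nonneg (by positivity)]
  exact one_add_abs_mul_exp_le hρ hx.le

lemma tendsto_one_add_abs_mul_exp_atBot (hρ : 0 < ρ) :
    Tendsto (fun x => (1 + |x|) * exp (ρ * x)) atBot (𝓝 0) := by
  have hexp : Tendsto (fun x => (1 + 2 / ρ) * exp (ρ / 2 * x)) atBot (𝓝 0) := by
    simpa using (tendsto_exp_atBot.comp (tendsto_id.const_mul_atBot (half_pos hρ))).const_mul
      (1 + 2 / ρ)
  refine squeeze_zero' (Eventually.of_forall fun x => by positivity) ?_ hexp
  filter_upwards [eventually_le_atBot 0] with x hx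
  exact one_add_abs_mul_exp_le hρ hx

lemma integrableOn_Iio_of_abs_le {f : ℝ → ℝ} {M : ℝ} (hρ : 0 < ρ) (hf : Continuous f)
    (h : ∀ x < 0, |f x| ≤ M * ((1 + |x|) * exp (ρ * x))) : IntegrableOn f (Iio 0) :=
  Integrable.mono' ((integrableOn_one_add_abs_mul_exp hρ).const_mul M) hf.aestronglyMeasurable <|
    (ae_restrict_iff' measurableSet_Iio).2 (ae_of_all _ h)

lemma hasDerivAt_integral_Iio {F F' : ℝ → ℝ → ℝ} {t₀ M : ℝ} {s : Set ℝ} (hρ : 0 < ρ)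
    (hs : s ∈ 𝓝 t₀) (hF : ∀ t, Continuous (F t)) (hF' : Continuous (F' t₀))
    (hF₀ : IntegrableOn (F t₀) (Iio 0))
    (hderiv : ∀ t ∈ s, ∀ x < 0, HasDerivAt (F · x) (F' t x) t)
    (hbound : ∀ t ∈ s, ∀ x < 0, |F' t x| ≤ M * ((1 + |x|) * exp (ρ * x))) :
    HasDerivAt (fun t => ∫ x in Iio 0, F t x) (∫ x in Iio 0, F' t₀ x) t₀ :=
  (hasDerivAt_integral_of_dominated_loc_of_deriv_le hs
    (Eventually.of_forall fun t => (hF t).aestronglyMeasurable) hF₀ hF'.aestronglyMeasurable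
    ((ae_restrict_iff' measurableSet_Iio).2 (ae_of_all _ fun x hx t ht => hbound t ht x hx))
    ((integrableOn_one_add_abs_mul_exp hρ).const_mul M)
    ((ae_restrict_iff' measurableSet_Iio).2 (ae_of_all _ fun x hx t ht => hderiv t ht x hx))).2

lemma tendsto_integral_Iio {ι : Type*} {l : Filter ι} [l.IsCountablyGenerated]
    {F : ι → ℝ → ℝ} {g : ℝ → ℝ} {M : ℝ} (hρ : 0 < ρ) (hF : ∀ i, Continuous (F i))
    (hbound : ∀ᶠ i in l, ∀ x < 0, |F i x| ≤ M * ((1 + |x|) * exp (ρ * x)))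
    (hlim : ∀ x < 0, Tendsto (F · x) l (𝓝 (g x))) :
    Tendsto (fun i => ∫ x in Iio 0, F i x) l (𝓝 (∫ x in Iio 0, g x)) :=
  tendsto_integral_filter_of_dominated_convergence _
    (Eventually.of_forall fun i => (hF i).aestronglyMeasurable)
    (hbound.mono fun _ hi => (ae_restrict_iff' measurableSet_Iio).2 (ae_of_all _ hi))
    ((integrableOn_one_add_abs_mul_exp hρ).const_mul M)
    ((ae_restrict_iff' measurableSet_Iio).2 (ae_of_all _ hlim))

end ExpWeight

lemma tendsto_abs_inv_pow_mul_exp_neg_div {a : ℝ} (ha : 0 < a) (n : ℕ) :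
    Tendsto (fun ε : ℝ => |ε⁻¹| ^ n * exp (-(a / ε))) (𝓝[>] 0) (𝓝 0) := by
  have h := ((tendsto_pow_mul_exp_neg_atTop_nhds_zero n).comp
    (tendsto_inv_nhdsGT_zero.const_mul_atTop ha)).const_mul (a⁻¹ ^ n)
  rw [mul_zero] at h
  refine h.congr' (eventually_mem_nhdsWithin.mono fun ε (hε : 0 < ε) => ?_)
  simp only [Function.comp_apply]
  rw [abs_of_pos (inv_pos.2 hε), div_eq_mul_inv, ← mul_assoc, ← mul_pow,
    inv_mul_cancel_left₀ ha.ne']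

noncomputable def cumulative (K : ℝ → ℝ) (x : ℝ) : ℝ := ∫ y in Iic x, K y

structure LeftExpDecay (K : ℝ → ℝ) (α ρ : ℝ) : Prop where
  continuous : Continuous K
  rate_pos : 0 < ρ
  abs_le : ∀ x ≤ 0, |K x| ≤ α * exp (ρ * x)

namespace LeftExpDecay

variable {K : ℝ → ℝ} {α ρ : ℝ} (hK : LeftExpDecay K α ρ)
include hK

lemma amplitude_nonneg : 0 ≤ α := by
  simpa using (abs_nonneg _).trans (hK.abs_le 0 le_rfl)

lemma integrableOn_Iic (b : ℝ) : IntegrableOn K (Iic b) := by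
  have h0 : IntegrableOn K (Iic 0) :=
    Integrable.mono' ((integrableOn_exp_mul_Iic hK.rate_pos 0).const_mul α)
      hK.continuous.aestronglyMeasurable <|
      (ae_restrict_iff' measurableSet_Iic).2 (ae_of_all _ hK.abs_le)
  exact (h0.union hK.continuous.integrableOn_Icc).mono_set fun x hx =>
    (le_total x 0).imp id fun h => ⟨h, hx⟩

lemma intervalIntegral_eq_cumulative_sub (a b : ℝ) :
    ∫ y in a..b, K y = cumulative K b - cumulative K a :=
  (intervalIntegral.integral_Iic_sub_Iic (hK.integrableOn_Iic a) (hK.integrableOn_Iic b)).symm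

lemma hasDerivAt_cumulative (x : ℝ) : HasDerivAt (cumulative K) (K x) x := by
  have h := (intervalIntegral.integral_hasDerivAt_right (hK.continuous.intervalIntegrable 0 x)
    (hK.continuous.stronglyMeasurableAtFilter _ _) hK.continuous.continuousAt).const_add
    (cumulative K 0)
  refine h.congr_of_eventuallyEq (Eventually.of_forall fun y => ?_)
  simp only [hK.intervalIntegral_eq_cumulative_sub]
  ring

lemma continuous_cumulative : Continuous (cumulative K) :=
  continuous_iff_continuousAt.2 fun x => (hK.hasDerivAt_cumulative x).continuousAt

lemma continuous_cumulative_sub (s : ℝ) :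
    Continuous (fun x => cumulative K x - cumulative K (x - s)) :=
  hK.continuous_cumulative.sub (hK.continuous_cumulative.comp (by fun_prop))

lemma continuous_comp_sub_mul (s r : ℝ) : Continuous (fun x => K (x - s) * r) :=
  (hK.continuous.comp (by fun_prop)).mul continuous_const

lemma abs_cumulative_le {x : ℝ} (hx : x ≤ 0) : |cumulative K x| ≤ α / ρ * exp (ρ * x) :=
  calc |cumulative K x| ≤ ∫ y in Iic x, |K y| := abs_integral_le_integral_abs
    _ ≤ ∫ y in Iic x, α * exp (ρ * y) :=
        setIntegral_mono_on (hK.integrableOn_Iic x).abs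
          ((integrableOn_exp_mul_Iic hK.rate_pos x).const_mul α) measurableSet_Iic
          fun y hy => hK.abs_le y (le_trans hy hx)
    _ = α / ρ * exp (ρ * x) := by
        rw [integral_const_mul, integral_exp_mul_Iic hK.rate_pos]; ring

lemma abs_cumulative_sub_le {x s : ℝ} (hx : x ≤ 0) (hs : 0 ≤ s) :
    |cumulative K x - cumulative K (x - s)| ≤ 2 * α / ρ * exp (ρ * x) := by
  have hshift : exp (ρ * (x - s)) ≤ exp (ρ * x) :=
    exp_le_exp.2 (by nlinarith [hK.rate_pos])
  calc |cumulative K x - cumulative K (x - s)|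
      ≤ |cumulative K x| + |cumulative K (x - s)| := abs_sub _ _
    _ ≤ α / ρ * exp (ρ * x) + α / ρ * exp (ρ * (x - s)) :=
        add_le_add (hK.abs_cumulative_le hx) (hK.abs_cumulative_le (by linarith))
    _ ≤ 2 * α / ρ * exp (ρ * x) := by
        have := mul_le_mul_of_nonneg_left hshift (div_nonneg hK.amplitude_nonneg hK.rate_pos.le)
        linarith [show 2 * α / ρ * exp (ρ * x) = 2 * (α / ρ * exp (ρ * x)) by ring]

lemma abs_comp_sub_le {x s : ℝ} (hx : x ≤ 0) (hs : 0 ≤ s) :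
    |K (x - s)| ≤ α * exp (-(ρ * s)) * exp (ρ * x) := by
  rw [mul_assoc, ← exp_add]
  convert hK.abs_le (x - s) (by linarith) using 3; ring

lemma integral_deriv_mul_cumulative {u u' : ℝ → ℝ} {M N : ℝ} (hu : ∀ x, HasDerivAt u (u' x) x)
    (hu' : Continuous u') (hu_le : ∀ x < 0, |u x| ≤ M * (1 + |x|))
    (hu'_le : ∀ x < 0, |u' x| ≤ N * (1 + |x|)) :
    ∫ x in Iio 0, u' x * cumulative K x = u 0 * cumulative K 0 - ∫ x in Iio 0, u x * K x := by
  have hu_cont : Continuous u := continuous_iff_continuousAt.2 fun x => (hu x).continuousAt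
  have hcum_le : ∀ x < 0, |cumulative K x| ≤ α / ρ * exp (ρ * x) := fun x hx =>
    hK.abs_cumulative_le hx.le
  have hcum_u' : IntegrableOn (fun x => cumulative K x * u' x) (Iic 0) :=
    (integrableOn_Iic_iff_integrableOn_Iio).2 <|
      integrableOn_Iio_of_abs_le (M := α / ρ * N) hK.rate_pos
        (hK.continuous_cumulative.mul hu') fun x hx =>
        (abs_mul_le_of_abs_le (hcum_le x hx) (hu'_le x hx)).trans_eq (by ring)
  have hKu : IntegrableOn (fun x => K x * u x) (Iic 0) :=
    (integrableOn_Iic_iff_integrableOn_Iio).2 <|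
      integrableOn_Iio_of_abs_le (M := α * M) hK.rate_pos (hK.continuous.mul hu_cont)
        fun x hx => (abs_mul_le_of_abs_le (hK.abs_le x hx.le) (hu_le x hx)).trans_eq (by ring)
  have h_infty : Tendsto (cumulative K * u) atBot (𝓝 0) := by
    have hw := (tendsto_one_add_abs_mul_exp_atBot hK.rate_pos).const_mul (α / ρ * M)
    rw [mul_zero] at hw
    refine squeeze_zero_norm' ?_ hw
    filter_upwards [eventually_lt_atBot 0] with x hx
    exact (abs_mul_le_of_abs_le (hcum_le x hx) (hu_le x hx)).trans_eq (by ring)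
  have key := integral_Iic_mul_deriv_eq_deriv_mul (fun x _ => hK.hasDerivAt_cumulative x)
    (fun x _ => hu x) hcum_u' hKu
    ((hK.continuous_cumulative.mul hu_cont).tendsto 0 |>.mono_left nhdsWithin_le_nhds)
    h_infty
  simp only [integral_Iic_eq_integral_Iio, Pi.mul_apply, sub_zero] at key
  simp only [mul_comm (u' _), mul_comm (u _)]
  rw [key, mul_comm]

lemma abs_mul_cumulative_sub_le {k x s M : ℝ} (hk : |k| ≤ M * (1 + |x|)) (hx : x ≤ 0)
    (hs : 0 ≤ s) :
    |k * (cumulative K x - cumulative K (x - s))| ≤ M * (2 * α / ρ) * ((1 + |x|) * exp (ρ * x)) :=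
  (abs_mul_le_of_abs_le hk (hK.abs_cumulative_sub_le hx hs)).trans_eq (by ring)

lemma abs_mul_comp_sub_le {k x s r R M : ℝ} (hk : |k| ≤ M * (1 + |x|)) (hx : x ≤ 0)
    (hs : 0 ≤ s) (hr : |r| * exp (-(ρ * s)) ≤ R) :
    |k * (K (x - s) * r)| ≤ M * α * R * ((1 + |x|) * exp (ρ * x)) := by
  have hKr : |K (x - s) * r| ≤ α * R * exp (ρ * x) := by
    rw [abs_mul]
    calc |K (x - s)| * |r| ≤ α * exp (-(ρ * s)) * exp (ρ * x) * |r| := by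
          gcongr; exact hK.abs_comp_sub_le hx hs
      _ = α * (|r| * exp (-(ρ * s))) * exp (ρ * x) := by ring
      _ ≤ α * R * exp (ρ * x) := by gcongr; exact hK.amplitude_nonneg
  exact (abs_mul_le_of_abs_le hk hKr).trans_eq (by ring)

lemma abs_mul_exp_neg_le (r : ℝ) {s : ℝ} (hs : 0 ≤ s) : |r| * exp (-(ρ * s)) ≤ |r| :=
  mul_le_of_le_one_right (abs_nonneg r)
    (exp_le_one_iff.2 (neg_nonpos.2 (mul_nonneg hK.rate_pos.le hs)))

lemma tendsto_cumulative_atBot : Tendsto (cumulative K) atBot (𝓝 0) := by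
  have h := (tendsto_exp_atBot.comp (tendsto_id.const_mul_atBot hK.rate_pos)).const_mul (α / ρ)
  rw [mul_zero] at h
  refine squeeze_zero_norm' ?_ h
  filter_upwards [eventually_le_atBot 0] with x hx
  exact hK.abs_cumulative_le hx

variable {τ : ℝ} (hτ : 0 < τ)
include hτ

lemma tendsto_cumulative_sub (x : ℝ) :
    Tendsto (fun ε => cumulative K x - cumulative K (x - τ / ε)) (𝓝[>] 0) (𝓝 (cumulative K x)) := by
  have hshift : Tendsto (fun ε : ℝ => x - τ / ε) (𝓝[>] 0) atBot := by
    simp only [div_eq_mul_inv, sub_eq_add_neg]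
    exact tendsto_atBot_add_const_left _ x
      (tendsto_neg_atTop_atBot.comp (tendsto_inv_nhdsGT_zero.const_mul_atTop hτ))
  simpa using tendsto_const_nhds.sub (hK.tendsto_cumulative_atBot.comp hshift)

lemma tendsto_integral_mul_cumulative_sub {k : ℝ → ℝ → ℝ} {k₀ : ℝ → ℝ} {ε₀ M : ℝ}
    (hε₀ : 0 < ε₀) (hk : ∀ ε, Continuous (k ε))
    (hkM : ∀ ε ∈ Ioo 0 ε₀, ∀ x ≤ 0, |k ε x| ≤ M * (1 + |x|))
    (hlim : ∀ x < 0, Tendsto (fun ε => k ε x) (𝓝[>] 0) (𝓝 (k₀ x))) :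
    Tendsto (fun ε => ∫ x in Iio 0, k ε x * (cumulative K x - cumulative K (x - τ / ε)))
      (𝓝[>] 0) (𝓝 (∫ x in Iio 0, k₀ x * cumulative K x)) := by
  refine tendsto_integral_Iio (M := M * (2 * α / ρ)) hK.rate_pos
    (fun ε => (hk ε).mul (hK.continuous_cumulative_sub _)) ?_
    fun x hx => (hlim x hx).mul (hK.tendsto_cumulative_sub hτ x)
  filter_upwards [Ioo_mem_nhdsGT hε₀] with ε hε x hx
  exact hK.abs_mul_cumulative_sub_le (hkM ε hε x hx.le) hx.le (div_nonneg hτ.le hε.1.le)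

lemma tendsto_integral_mul_comp_sub {k : ℝ → ℝ → ℝ} {r : ℝ → ℝ} {ε₀ M : ℝ}
    (hε₀ : 0 < ε₀) (hk : ∀ ε, Continuous (k ε))
    (hkM : ∀ ε ∈ Ioo 0 ε₀, ∀ x ≤ 0, |k ε x| ≤ M * (1 + |x|))
    (hr : Tendsto (fun ε => |r ε| * exp (-(ρ * (τ / ε)))) (𝓝[>] 0) (𝓝 0)) :
    Tendsto (fun ε => ∫ x in Iio 0, k ε x * (K (x - τ / ε) * r ε)) (𝓝[>] 0) (𝓝 0) := by
  have hbound : ∀ ε ∈ Ioo 0 ε₀, ∀ x ≤ 0, |k ε x * (K (x - τ / ε) * r ε)| ≤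
      M * α * (|r ε| * exp (-(ρ * (τ / ε)))) * ((1 + |x|) * exp (ρ * x)) := fun ε hε x hx =>
    hK.abs_mul_comp_sub_le (hkM ε hε x hx) hx (div_nonneg hτ.le hε.1.le) le_rfl
  have hlim := tendsto_integral_Iio (F := fun ε x => k ε x * (K (x - τ / ε) * r ε))
    (l := 𝓝[>] 0) (g := fun _ => 0) (M := M * α * 1) hK.rate_pos
    (fun ε => (hk ε).mul (hK.continuous_comp_sub_mul _ _)) ?_ ?_
  · simpa using hlim
  · filter_upwards [Ioo_mem_nhdsGT hε₀, hr.eventually (ge_mem_nhds one_pos)] with ε hε hr1 x hx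
    exact hK.abs_mul_comp_sub_le (hkM ε hε x hx.le) hx.le (div_nonneg hτ.le hε.1.le) hr1
  · intro x hx
    have h := (hr.const_mul (M * α)).mul_const ((1 + |x|) * exp (ρ * x))
    simp only [mul_zero, zero_mul] at h
    refine squeeze_zero_norm' ?_ h
    filter_upwards [Ioo_mem_nhdsGT hε₀] with ε hε
    exact (hbound ε hε x hx.le).trans_eq (by ring)

end LeftExpDecay

noncomputable def disc (γ ε : ℝ) : ℝ := (1 - γ * ε) ^ 2 - 4 * ε

noncomputable def coef1 (γ ε : ℝ) : ℝ := (1 - om2 γ ε) / (om1 γ ε - om2 γ ε)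

noncomputable def coef2 (γ ε : ℝ) : ℝ := (om1 γ ε - 1) / (om1 γ ε - om2 γ ε)

section Roots

variable {γ : ℝ}

lemma om1_sub_om2 (γ ε : ℝ) : om1 γ ε - om2 γ ε = √(disc γ ε) := by
  unfold om1 om2 disc; ring

lemma Cx_eq (γ x c ε : ℝ) :
    Cx γ x c ε = coef1 γ ε / c * exp (om1 γ ε / c * x) + coef2 γ ε / c * exp (om2 γ ε / c * x) := by
  unfold Cx coef1 coef2
  simp only [mul_inv, div_eq_mul_inv]
  ring_nf

lemma om2_nonneg (hγ : 0 ≤ γ) {ε : ℝ} (hε : 0 ≤ ε) : 0 ≤ om2 γ ε := by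
  have hle : √((1 - γ * ε) ^ 2 - 4 * ε) ≤ 1 + γ * ε := by
    rw [sqrt_le_left (by positivity)]
    nlinarith [mul_nonneg hγ hε]
  unfold om2; linarith

lemma om1_nonneg (hγ : 0 ≤ γ) {ε : ℝ} (hε : 0 ≤ ε) : 0 ≤ om1 γ ε := by
  have := om1_sub_om2 γ ε
  linarith [om2_nonneg hγ hε, sqrt_nonneg (disc γ ε)]

lemma isOpen_disc_pos (γ : ℝ) : IsOpen {t | 0 < disc γ t} :=
  isOpen_lt continuous_const (by unfold disc; fun_prop)

lemma exists_Icc_subset_disc_pos (γ : ℝ) : ∃ ε₀ > 0, Icc 0 ε₀ ⊆ {t | 0 < disc γ t} := by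
  obtain ⟨r, hr, hball⟩ := Metric.isOpen_iff.1 (isOpen_disc_pos γ) 0 (by simp [disc])
  refine ⟨r / 2, half_pos hr, fun t ht => hball ?_⟩
  rw [Metric.mem_ball, dist_zero_right, norm_of_nonneg ht.1]
  linarith [ht.2]

lemma contDiffOn_sqrt_disc {n : WithTop ℕ∞} :
    ContDiffOn ℝ n (fun t => √(disc γ t)) {t | 0 < disc γ t} :=
  (by unfold disc; fun_prop : ContDiff ℝ n (disc γ)).contDiffOn.sqrt fun _ ht => ht.ne'

lemma contDiffOn_om1 {n : WithTop ℕ∞} : ContDiffOn ℝ n (om1 γ) {t | 0 < disc γ t} :=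
  ((contDiffOn_const.add (contDiffOn_const.mul contDiffOn_id)).add contDiffOn_sqrt_disc).div_const 2

lemma contDiffOn_om2 {n : WithTop ℕ∞} : ContDiffOn ℝ n (om2 γ) {t | 0 < disc γ t} :=
  ((contDiffOn_const.add (contDiffOn_const.mul contDiffOn_id)).sub contDiffOn_sqrt_disc).div_const 2

lemma om1_sub_om2_ne_zero {t : ℝ} (ht : 0 < disc γ t) : om1 γ t - om2 γ t ≠ 0 := by
  rw [om1_sub_om2]; exact (sqrt_pos.2 ht).ne'

lemma contDiffOn_coef1 {n : WithTop ℕ∞} : ContDiffOn ℝ n (coef1 γ) {t | 0 < disc γ t} :=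
  (contDiffOn_const.sub contDiffOn_om2).div (contDiffOn_om1.sub contDiffOn_om2)
    fun _ ht => om1_sub_om2_ne_zero ht

lemma contDiffOn_coef2 {n : WithTop ℕ∞} : ContDiffOn ℝ n (coef2 γ) {t | 0 < disc γ t} :=
  (contDiffOn_om1.sub contDiffOn_const).div (contDiffOn_om1.sub contDiffOn_om2)
    fun _ ht => om1_sub_om2_ne_zero ht

@[simp] lemma disc_zero (γ : ℝ) : disc γ 0 = 1 := by simp [disc]
@[simp] lemma om1_zero (γ : ℝ) : om1 γ 0 = 1 := by norm_num [om1]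
@[simp] lemma om2_zero (γ : ℝ) : om2 γ 0 = 0 := by norm_num [om2]
@[simp] lemma coef1_zero (γ : ℝ) : coef1 γ 0 = 1 := by simp [coef1]
@[simp] lemma coef2_zero (γ : ℝ) : coef2 γ 0 = 0 := by simp [coef2]

lemma hasDerivAt_sqrt_disc_zero (γ : ℝ) : HasDerivAt (fun t => √(disc γ t)) (-(γ + 2)) 0 := by
  have hdisc : HasDerivAt (fun t => disc γ t) (-(2 * γ + 4)) 0 := by
    have := ((((hasDerivAt_id' (0 : ℝ)).const_mul γ).const_sub 1).fun_pow 2).fun_sub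
      ((hasDerivAt_id' (0 : ℝ)).const_mul 4)
    exact this.congr_deriv (by norm_num; ring)
  exact (hdisc.sqrt (by simp)).congr_deriv (by simp; ring)

lemma hasDerivAt_om1_zero (γ : ℝ) : HasDerivAt (om1 γ) (-1) 0 := by
  have := ((((hasDerivAt_id' (0 : ℝ)).const_mul γ).const_add 1).fun_add
    (hasDerivAt_sqrt_disc_zero γ)).div_const 2
  exact this.congr_deriv (by ring)

lemma hasDerivAt_om2_zero (γ : ℝ) : HasDerivAt (om2 γ) (γ + 1) 0 := by
  have := ((((hasDerivAt_id' (0 : ℝ)).const_mul γ).const_add 1).fun_sub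
    (hasDerivAt_sqrt_disc_zero γ)).div_const 2
  exact this.congr_deriv (by ring)

lemma hasDerivAt_coef1_zero (γ : ℝ) : HasDerivAt (coef1 γ) 1 0 := by
  have := ((hasDerivAt_om2_zero γ).const_sub 1).fun_div
    ((hasDerivAt_om1_zero γ).fun_sub (hasDerivAt_om2_zero γ)) (by simp)
  exact this.congr_deriv (by simp)

lemma hasDerivAt_coef2_zero (γ : ℝ) : HasDerivAt (coef2 γ) (-1) 0 := by
  have := ((hasDerivAt_om1_zero γ).sub_const 1).fun_div
    ((hasDerivAt_om1_zero γ).fun_sub (hasDerivAt_om2_zero γ)) (by simp)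
  exact this.congr_deriv (by simp)

end Roots

noncomputable def mulExpDeriv (a a' l l' x : ℝ) : ℝ := (a' + a * l' * x) * exp (l * x)

lemma hasDerivAt_mul_exp {a l : ℝ → ℝ} {a' l' t : ℝ} (x : ℝ) (ha : HasDerivAt a a' t)
    (hl : HasDerivAt l l' t) :
    HasDerivAt (fun s => a s * exp (l s * x)) (mulExpDeriv (a t) a' (l t) l' x) t :=
  (ha.fun_mul (hl.mul_const x).exp).congr_deriv (by unfold mulExpDeriv; ring)

lemma abs_mul_exp_le {a l x : ℝ} (hl : 0 ≤ l) (hx : x ≤ 0) :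
    |a * exp (l * x)| ≤ |a| * (1 + |x|) := by
  rw [abs_mul, abs_exp]
  gcongr
  exact (exp_le_one_iff.2 (mul_nonpos_of_nonneg_of_nonpos hl hx)).trans (by simp)

lemma abs_mulExpDeriv_le {a a' l l' x : ℝ} (hl : 0 ≤ l) (hx : x ≤ 0) :
    |mulExpDeriv a a' l l' x| ≤ (|a'| + |a| * |l'|) * (1 + |x|) := by
  unfold mulExpDeriv
  rw [abs_mul, abs_exp]
  have hexp : exp (l * x) ≤ 1 := exp_le_one_iff.2 (mul_nonpos_of_nonneg_of_nonpos hl hx)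
  calc |a' + a * l' * x| * exp (l * x) ≤ (|a'| + |a| * |l'| * |x|) * 1 := by
        gcongr
        exact (abs_add_le _ _).trans (by rw [abs_mul, abs_mul])
    _ ≤ (|a'| + |a| * |l'|) * (1 + |x|) := by
        nlinarith [abs_nonneg a', abs_nonneg x, mul_nonneg (abs_nonneg a) (abs_nonneg l')]

noncomputable def CxDerivC (γ x c ε : ℝ) : ℝ :=
  mulExpDeriv (coef1 γ ε / c) (-(coef1 γ ε / c ^ 2)) (om1 γ ε / c) (-(om1 γ ε / c ^ 2)) x +
    mulExpDeriv (coef2 γ ε / c) (-(coef2 γ ε / c ^ 2)) (om2 γ ε / c) (-(om2 γ ε / c ^ 2)) x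

noncomputable def CxDerivEps (γ x c ε : ℝ) : ℝ :=
  mulExpDeriv (coef1 γ ε / c) (deriv (coef1 γ) ε / c) (om1 γ ε / c) (deriv (om1 γ) ε / c) x +
    mulExpDeriv (coef2 γ ε / c) (deriv (coef2 γ) ε / c) (om2 γ ε / c) (deriv (om2 γ) ε / c) x

section PartialDerivatives

variable {γ : ℝ}

lemma hasDerivAt_Cx_c (x ε : ℝ) {c : ℝ} (hc : c ≠ 0) :
    HasDerivAt (fun c' => Cx γ x c' ε) (CxDerivC γ x c ε) c := by
  have hdiv (k : ℝ) : HasDerivAt (fun c' => k / c') (-(k / c ^ 2)) c :=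
    ((hasDerivAt_const c k).fun_div (hasDerivAt_id' c) hc).congr_deriv (by ring)
  simp only [Cx_eq]
  exact (hasDerivAt_mul_exp x (hdiv _) (hdiv _)).fun_add (hasDerivAt_mul_exp x (hdiv _) (hdiv _))

lemma hasDerivAt_Cx_eps (x c : ℝ) {ε : ℝ} (hε : 0 < disc γ ε) :
    HasDerivAt (fun e => Cx γ x c e) (CxDerivEps γ x c ε) ε := by
  have hd {f : ℝ → ℝ} (hf : ContDiffOn ℝ 1 f {t | 0 < disc γ t}) :
      HasDerivAt (fun e => f e / c) (deriv f ε / c) ε :=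
    ((hf.differentiableOn one_ne_zero ε hε).differentiableAt
      ((isOpen_disc_pos γ).mem_nhds hε)).hasDerivAt.div_const c
  simp only [Cx_eq]
  exact (hasDerivAt_mul_exp x (hd contDiffOn_coef1) (hd contDiffOn_om1)).fun_add
    (hasDerivAt_mul_exp x (hd contDiffOn_coef2) (hd contDiffOn_om2))

lemma continuous_Cx (γ c ε : ℝ) : Continuous (fun x => Cx γ x c ε) := by
  unfold Cx; fun_prop

lemma continuous_CxDerivC (γ c ε : ℝ) : Continuous (fun x => CxDerivC γ x c ε) := by
  unfold CxDerivC mulExpDeriv; fun_prop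

lemma continuous_CxDerivEps (γ c ε : ℝ) : Continuous (fun x => CxDerivEps γ x c ε) := by
  unfold CxDerivEps mulExpDeriv; fun_prop

lemma CxDerivC_zero (γ x c : ℝ) :
    CxDerivC γ x c 0 = (-(1 / c ^ 2) + -(1 / c ^ 3) * x) * exp (x / c) := by
  simp [CxDerivC, mulExpDeriv]; ring_nf

lemma CxDerivEps_zero (γ x c : ℝ) :
    CxDerivEps γ x c 0 = (1 / c + -(1 / c ^ 2) * x) * exp (x / c) + -(1 / c) := by
  simp [CxDerivEps, mulExpDeriv, (hasDerivAt_coef1_zero γ).deriv, (hasDerivAt_om1_zero γ).deriv,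
    (hasDerivAt_coef2_zero γ).deriv, (hasDerivAt_om2_zero γ).deriv]
  ring_nf

lemma continuousOn_deriv_of_contDiffOn {f : ℝ → ℝ} (hf : ContDiffOn ℝ 1 f {t | 0 < disc γ t}) :
    ContinuousOn (deriv f) {t | 0 < disc γ t} :=
  hf.continuousOn_deriv_of_isOpen (isOpen_disc_pos γ) le_rfl

lemma continuousAt_CxDerivC_zero (x c : ℝ) : ContinuousAt (fun e => CxDerivC γ x c e) 0 := by
  have h0 : {t | 0 < disc γ t} ∈ 𝓝 0 := (isOpen_disc_pos γ).mem_nhds (by simp)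
  have := (contDiffOn_coef1 (n := 0)).continuousOn.continuousAt h0
  have := (contDiffOn_coef2 (n := 0)).continuousOn.continuousAt h0
  have := (contDiffOn_om1 (n := 0)).continuousOn.continuousAt h0
  have := (contDiffOn_om2 (n := 0)).continuousOn.continuousAt h0
  unfold CxDerivC mulExpDeriv; fun_prop

lemma continuousAt_CxDerivEps_zero (x c : ℝ) : ContinuousAt (fun e => CxDerivEps γ x c e) 0 := by
  have h0 : {t | 0 < disc γ t} ∈ 𝓝 0 := (isOpen_disc_pos γ).mem_nhds (by simp)
  have := (contDiffOn_coef1 (n := 0)).continuousOn.continuousAt h0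
  have := (contDiffOn_coef2 (n := 0)).continuousOn.continuousAt h0
  have := (contDiffOn_om1 (n := 0)).continuousOn.continuousAt h0
  have := (contDiffOn_om2 (n := 0)).continuousOn.continuousAt h0
  have := (continuousOn_deriv_of_contDiffOn contDiffOn_coef1).continuousAt h0
  have := (continuousOn_deriv_of_contDiffOn contDiffOn_coef2).continuousAt h0
  have := (continuousOn_deriv_of_contDiffOn contDiffOn_om1).continuousAt h0
  have := (continuousOn_deriv_of_contDiffOn contDiffOn_om2).continuousAt h0
  unfold CxDerivEps mulExpDeriv; fun_prop

section Bounds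

variable {ε₀ : ℝ} (hγ : 0 ≤ γ) (hS : Icc 0 ε₀ ⊆ {t | 0 < disc γ t})
include hγ hS

lemma exists_abs_Cx_le {c : ℝ} (hc : 0 < c) :
    ∃ M, ∀ t ∈ Icc 0 ε₀, ∀ x ≤ 0, |Cx γ x c t| ≤ M * (1 + |x|) := by
  have := (contDiffOn_coef1 (n := 0)).continuousOn.mono hS
  have := (contDiffOn_coef2 (n := 0)).continuousOn.mono hS
  obtain ⟨M, hM⟩ := isCompact_Icc.exists_bound_of_continuousOn
    (f := fun t => |coef1 γ t / c| + |coef2 γ t / c|) (by fun_prop)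
  refine ⟨M, fun t ht x hx => ?_⟩
  rw [Cx_eq]
  calc _ ≤ _ := abs_add_le _ _
    _ ≤ |coef1 γ t / c| * (1 + |x|) + |coef2 γ t / c| * (1 + |x|) :=
        add_le_add (abs_mul_exp_le (div_nonneg (om1_nonneg hγ ht.1) hc.le) hx)
          (abs_mul_exp_le (div_nonneg (om2_nonneg hγ ht.1) hc.le) hx)
    _ ≤ M * (1 + |x|) := by
        rw [← add_mul]; gcongr; exact (le_abs_self _).trans (hM t ht)

lemma exists_abs_CxDerivEps_le {c : ℝ} (hc : 0 < c) :
    ∃ M, ∀ t ∈ Icc 0 ε₀, ∀ x ≤ 0, |CxDerivEps γ x c t| ≤ M * (1 + |x|) := by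
  have := (contDiffOn_coef1 (n := 1)).continuousOn.mono hS
  have := (contDiffOn_coef2 (n := 1)).continuousOn.mono hS
  have := (continuousOn_deriv_of_contDiffOn contDiffOn_coef1).mono hS
  have := (continuousOn_deriv_of_contDiffOn contDiffOn_coef2).mono hS
  have := (continuousOn_deriv_of_contDiffOn contDiffOn_om1).mono hS
  have := (continuousOn_deriv_of_contDiffOn contDiffOn_om2).mono hS
  obtain ⟨M, hM⟩ := isCompact_Icc.exists_bound_of_continuousOn
    (f := fun t => (|deriv (coef1 γ) t / c| + |coef1 γ t / c| * |deriv (om1 γ) t / c|) +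
      (|deriv (coef2 γ) t / c| + |coef2 γ t / c| * |deriv (om2 γ) t / c|)) (by fun_prop)
  refine ⟨M, fun t ht x hx => ?_⟩
  calc _ ≤ _ := abs_add_le _ _
    _ ≤ _ := add_le_add (abs_mulExpDeriv_le (div_nonneg (om1_nonneg hγ ht.1) hc.le) hx)
          (abs_mulExpDeriv_le (div_nonneg (om2_nonneg hγ ht.1) hc.le) hx)
    _ ≤ M * (1 + |x|) := by
        rw [← add_mul]; gcongr; exact (le_abs_self _).trans (hM t ht)

lemma exists_abs_CxDerivC_le {c : ℝ} (hc : 0 < c) :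
    ∃ M, ∀ t ∈ Icc 0 ε₀, ∀ c' ≥ c / 2, ∀ x ≤ 0, |CxDerivC γ x c' t| ≤ M * (1 + |x|) := by
  have := (contDiffOn_coef1 (n := 0)).continuousOn.mono hS
  have := (contDiffOn_coef2 (n := 0)).continuousOn.mono hS
  have := (contDiffOn_om1 (n := 0)).continuousOn.mono hS
  have := (contDiffOn_om2 (n := 0)).continuousOn.mono hS
  set d := c / 2
  have hd : 0 < d := half_pos hc
  obtain ⟨M, hM⟩ := isCompact_Icc.exists_bound_of_continuousOn
    (f := fun t => (|coef1 γ t| / d ^ 2 + |coef1 γ t| / d * (|om1 γ t| / d ^ 2)) +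
      (|coef2 γ t| / d ^ 2 + |coef2 γ t| / d * (|om2 γ t| / d ^ 2))) (by fun_prop)
  refine ⟨M, fun t ht c' hc' x hx => ?_⟩
  have hc'₀ : 0 < c' := hd.trans_le hc'
  have hdiv {k : ℝ} {n : ℕ} : |k / c' ^ n| ≤ |k| / d ^ n := by
    rw [abs_div, abs_of_pos (pow_pos hc'₀ n)]; gcongr
  have hterm {k w : ℝ} (hw : 0 ≤ w) :
      |mulExpDeriv (k / c') (-(k / c' ^ 2)) (w / c') (-(w / c' ^ 2)) x| ≤
        (|k| / d ^ 2 + |k| / d * (|w| / d ^ 2)) * (1 + |x|) := by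
    refine (abs_mulExpDeriv_le (div_nonneg hw hc'₀.le) hx).trans ?_
    simp only [abs_neg]
    gcongr
    · exact hdiv
    · simpa using hdiv (n := 1)
    · exact hdiv
  calc _ ≤ _ := abs_add_le _ _
    _ ≤ _ := add_le_add (hterm (om1_nonneg hγ ht.1)) (hterm (om2_nonneg hγ ht.1))
    _ ≤ M * (1 + |x|) := by
        rw [← add_mul]; gcongr; exact (le_abs_self _).trans (hM t ht)

end Bounds

end PartialDerivatives

namespace LeftExpDecay

section

variable {K : ℝ → ℝ} {α ρ γ c : ℝ} (hK : LeftExpDecay K α ρ)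
include hK

lemma ff_eq (γ τ c ε : ℝ) :
    ff K γ τ c ε = ∫ x in Iio 0, Cx γ x c ε * (cumulative K x - cumulative K (x - τ / ε)) := by
  simp only [ff, hK.intervalIntegral_eq_cumulative_sub]

lemma integral_CxDerivC_zero_mul_cumulative (hc : 0 < c) :
    ∫ x in Iio 0, CxDerivC γ x c 0 * cumulative K x =
      1 / c ^ 2 * ∫ x in Iio 0, x * exp (x / c) * K x := by
  have hu (x : ℝ) :
      HasDerivAt (fun y => -(1 / c ^ 2) * y * exp (y / c)) (CxDerivC γ x c 0) x := by
    rw [CxDerivC_zero]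
    exact (((hasDerivAt_id' x).const_mul _).fun_mul
      ((hasDerivAt_id' x).div_const c).exp).congr_deriv (by ring)
  rw [hK.integral_deriv_mul_cumulative hu (continuous_CxDerivC γ c 0)
    (fun x hx => (abs_mul_exp_div_le hc hx.le _).trans (abs_mul_le_of_abs_le le_rfl
      (le_add_of_nonneg_left zero_le_one)))
    (fun x hx => by
      rw [CxDerivC_zero]; exact (abs_mul_exp_div_le hc hx.le _).trans (abs_add_mul_le _ _ x))]
  simp only [zero_mul, mul_zero, zero_sub, mul_assoc, integral_const_mul]
  ring

lemma integral_two_add_mul_exp_add_mul (hc : 0 < c) :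
    ∫ x in Iio 0, ((2 + -(1 / c) * x) * exp (x / c) + -(1 / c) * x) * K x =
      (2 * ∫ x in Iio 0, exp (x / c) * K x) +
        1 / c * ∫ x in Iio 0, |x| * (exp (x / c) + 1) * K x := by
  have hcK := hK.continuous
  have hexp {x : ℝ} (hx : x < 0) : exp (x / c) ≤ 1 :=
    exp_le_one_iff.2 (div_nonpos_of_nonpos_of_nonneg hx.le hc.le)
  have hi₁ : IntegrableOn (fun x => exp (x / c) * K x) (Iio 0) :=
    integrableOn_Iio_of_abs_le (M := α) hK.rate_pos (by fun_prop) fun x hx => by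
      rw [mul_comm]
      refine (abs_mul_exp_div_le hc hx.le _).trans ((hK.abs_le x hx.le).trans ?_)
      exact mul_le_mul_of_nonneg_left (le_mul_of_one_le_left (exp_pos _).le (by simp))
        hK.amplitude_nonneg
  have hi₂ : IntegrableOn (fun x => |x| * (exp (x / c) + 1) * K x) (Iio 0) :=
    integrableOn_Iio_of_abs_le (M := 2 * α) hK.rate_pos (by fun_prop) fun x hx => by
      refine (abs_mul_le_of_abs_le (B := α * exp (ρ * x)) ?_ (hK.abs_le x hx.le)).trans_eq
        (by ring : 2 * (1 + |x|) * (α * exp (ρ * x)) = _)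
      rw [abs_of_nonneg (by positivity)]
      nlinarith [hexp hx, abs_nonneg x]
  rw [← integral_const_mul, ← integral_const_mul, ← integral_add (hi₁.const_mul _)
    (hi₂.const_mul _)]
  refine setIntegral_congr_fun measurableSet_Iio fun x hx => ?_
  simp only [abs_of_neg (show x < 0 from hx)]
  ring

lemma integral_CxDerivEps_zero_mul_cumulative (hc : 0 < c) :
    ∫ x in Iio 0, CxDerivEps γ x c 0 * cumulative K x =
      2 * phiF K c - 1 / c * ∫ x in Iio 0, |x| * (exp (x / c) + 1) * K x := by
  have hu (x : ℝ) : HasDerivAt (fun y => (2 + -(1 / c) * y) * exp (y / c) + -(1 / c) * y)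
      (CxDerivEps γ x c 0) x := by
    rw [CxDerivEps_zero]
    have hlin (a : ℝ) : HasDerivAt (fun y => a + -(1 / c) * y) (-(1 / c)) x :=
      ((hasDerivAt_id' x).const_mul _).const_add a |>.congr_deriv (by ring)
    exact ((hlin 2).fun_mul ((hasDerivAt_id' x).div_const c).exp).fun_add
      (((hasDerivAt_id' x).const_mul _)) |>.congr_deriv (by ring)
  rw [hK.integral_deriv_mul_cumulative hu (continuous_CxDerivEps γ c 0)
    (fun x hx => (abs_add_le _ _).trans (add_le_add
      ((abs_mul_exp_div_le hc hx.le _).trans (abs_add_mul_le _ _ x))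
      (abs_mul_le_of_abs_le le_rfl (le_add_of_nonneg_left zero_le_one)))
      |>.trans_eq (add_mul _ _ _).symm)
    (fun x hx => by
      rw [CxDerivEps_zero]
      exact (abs_add_le _ _).trans (add_le_add
        ((abs_mul_exp_div_le hc hx.le _).trans (abs_add_mul_le _ _ x))
        (le_mul_of_one_le_right (abs_nonneg _) (le_add_of_nonneg_right (abs_nonneg x))))
        |>.trans_eq (add_mul _ _ _).symm)]
  rw [hK.integral_two_add_mul_exp_add_mul hc, phiF, cumulative, integral_Iic_eq_integral_Iio]
  simp only [mul_zero, add_zero, zero_div, exp_zero, mul_one]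
  ring

lemma hasDerivAt_Cx_mul_cumulative_sub_eps (x : ℝ) {τ t : ℝ} (ht : 0 < t) (hdisc : 0 < disc γ t) :
    HasDerivAt (fun e => Cx γ x c e * (cumulative K x - cumulative K (x - τ / e)))
      (CxDerivEps γ x c t * (cumulative K x - cumulative K (x - τ / t)) +
        Cx γ x c t * (K (x - τ / t) * -(τ * t⁻¹ ^ 2))) t := by
  have hshift : HasDerivAt (fun e => x - τ / e) (τ * t⁻¹ ^ 2) t :=
    (((hasDerivAt_const t τ).fun_div (hasDerivAt_id' t) ht.ne').const_sub x).congr_deriv (by ring)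
  exact ((hasDerivAt_Cx_eps x c hdisc).mul
    (((hK.hasDerivAt_cumulative _).comp t hshift).const_sub _)).congr_deriv
    (by simp only [Function.comp_apply]; ring)

end

section SpeedIndex

variable {K : ℝ → ℝ} {α ρ γ ε₀ τ c : ℝ} (hK : LeftExpDecay K α ρ) (hγ : 0 ≤ γ)
  (hS : Icc 0 ε₀ ⊆ {t | 0 < disc γ t}) (hτ : 0 < τ) (hc : 0 < c)
include hK hγ hS hτ hc

lemma integrableOn_Cx_mul_cumulative_sub {ε : ℝ} (hε : ε ∈ Icc 0 ε₀) :
    IntegrableOn (fun x => Cx γ x c ε * (cumulative K x - cumulative K (x - τ / ε))) (Iio 0) := by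
  obtain ⟨M, hM⟩ := exists_abs_Cx_le hγ hS hc
  exact integrableOn_Iio_of_abs_le hK.rate_pos ((continuous_Cx γ c ε).mul
    (hK.continuous_cumulative_sub _)) fun x hx =>
    hK.abs_mul_cumulative_sub_le (hM ε hε x hx.le) hx.le (div_nonneg hτ.le hε.1)

lemma hasDerivAt_ff_tau {ε : ℝ} (hε : ε ∈ Ioo 0 ε₀) :
    HasDerivAt (fun τ' => ff K γ τ' c ε) (∫ x in Iio 0, Cx γ x c ε * (K (x - τ / ε) * ε⁻¹)) τ := by
  obtain ⟨M, hM⟩ := exists_abs_Cx_le hγ hS hc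
  have hεS : ε ∈ Icc 0 ε₀ := Ioo_subset_Icc_self hε
  simp only [hK.ff_eq]
  refine hasDerivAt_integral_Iio
    (F := fun t x => Cx γ x c ε * (cumulative K x - cumulative K (x - t / ε)))
    (F' := fun t x => Cx γ x c ε * (K (x - t / ε) * ε⁻¹)) (M := M * α * ε⁻¹) hK.rate_pos
    (Ioi_mem_nhds hτ)
    (fun t => (continuous_Cx γ c ε).mul (hK.continuous_cumulative_sub _))
    ((continuous_Cx γ c ε).mul (hK.continuous_comp_sub_mul _ _))
    (hK.integrableOn_Cx_mul_cumulative_sub hγ hS hτ hc hεS) (fun t _ x _ => ?_)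
    (fun t ht x hx => ?_)
  · have hshift : HasDerivAt (fun t => x - t / ε) (-ε⁻¹) t :=
      (((hasDerivAt_id' t).div_const ε).const_sub x).congr_deriv (by ring)
    exact ((((hK.hasDerivAt_cumulative _).comp t hshift).const_sub _).const_mul _).congr_deriv
      (by ring)
  · have hs : 0 ≤ t / ε := div_nonneg (le_of_lt ht) hε.1.le
    exact hK.abs_mul_comp_sub_le (hM ε hεS x hx.le) hx.le hs
      ((hK.abs_mul_exp_neg_le _ hs).trans_eq (abs_of_pos (inv_pos.2 hε.1)))

lemma hasDerivAt_ff_c {ε : ℝ} (hε : ε ∈ Ioo 0 ε₀) :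
    HasDerivAt (fun c' => ff K γ τ c' ε)
      (∫ x in Iio 0, CxDerivC γ x c ε * (cumulative K x - cumulative K (x - τ / ε))) c := by
  obtain ⟨M, hM⟩ := exists_abs_CxDerivC_le hγ hS hc
  have hεS : ε ∈ Icc 0 ε₀ := Ioo_subset_Icc_self hε
  simp only [hK.ff_eq]
  refine hasDerivAt_integral_Iio
    (F := fun t x => Cx γ x t ε * (cumulative K x - cumulative K (x - τ / ε)))
    (M := M * (2 * α / ρ)) hK.rate_pos (Ioi_mem_nhds (half_lt_self hc))
    (fun t => (continuous_Cx γ t ε).mul (hK.continuous_cumulative_sub _))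
    ((continuous_CxDerivC γ c ε).mul (hK.continuous_cumulative_sub _))
    (hK.integrableOn_Cx_mul_cumulative_sub hγ hS hτ hc hεS)
    (fun t ht x _ => (hasDerivAt_Cx_c x ε (half_pos hc |>.trans ht).ne').mul_const _)
    (fun t ht x hx => hK.abs_mul_cumulative_sub_le (hM ε hεS t (le_of_lt ht) x hx.le) hx.le
      (div_nonneg hτ.le hε.1.le))

lemma hasDerivAt_ff_eps {ε : ℝ} (hε : ε ∈ Ioo 0 ε₀) :
    HasDerivAt (fun e => ff K γ τ c e)
      ((∫ x in Iio 0, CxDerivEps γ x c ε * (cumulative K x - cumulative K (x - τ / ε))) +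
        ∫ x in Iio 0, Cx γ x c ε * (K (x - τ / ε) * -(τ * ε⁻¹ ^ 2))) ε := by
  obtain ⟨M₀, hM₀⟩ := exists_abs_Cx_le hγ hS hc
  obtain ⟨M₁, hM₁⟩ := exists_abs_CxDerivEps_le hγ hS hc
  have hεS : ε ∈ Icc 0 ε₀ := Ioo_subset_Icc_self hε
  have hA : IntegrableOn
      (fun x => CxDerivEps γ x c ε * (cumulative K x - cumulative K (x - τ / ε))) (Iio 0) :=
    integrableOn_Iio_of_abs_le hK.rate_pos ((continuous_CxDerivEps γ c ε).mul
      (hK.continuous_cumulative_sub _)) fun x hx =>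
      hK.abs_mul_cumulative_sub_le (hM₁ ε hεS x hx.le) hx.le (div_nonneg hτ.le hε.1.le)
  have hB : IntegrableOn (fun x => Cx γ x c ε * (K (x - τ / ε) * -(τ * ε⁻¹ ^ 2))) (Iio 0) :=
    integrableOn_Iio_of_abs_le hK.rate_pos ((continuous_Cx γ c ε).mul
      (hK.continuous_comp_sub_mul _ _)) fun x hx =>
      hK.abs_mul_comp_sub_le (hM₀ ε hεS x hx.le) hx.le (div_nonneg hτ.le hε.1.le) le_rfl
  simp only [hK.ff_eq]
  rw [← integral_add hA hB]
  refine hasDerivAt_integral_Iio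
    (F := fun t x => Cx γ x c t * (cumulative K x - cumulative K (x - τ / t)))
    (F' := fun t x => CxDerivEps γ x c t * (cumulative K x - cumulative K (x - τ / t)) +
      Cx γ x c t * (K (x - τ / t) * -(τ * t⁻¹ ^ 2)))
    (M := M₁ * (2 * α / ρ) + M₀ * α * (τ * (ε / 2)⁻¹ ^ 2)) hK.rate_pos
    (Ioo_mem_nhds (half_lt_self hε.1) hε.2)
    (fun t => (continuous_Cx γ c t).mul (hK.continuous_cumulative_sub _))
    (((continuous_CxDerivEps γ c ε).mul (hK.continuous_cumulative_sub _)).add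
      ((continuous_Cx γ c ε).mul (hK.continuous_comp_sub_mul _ _)))
    (hK.integrableOn_Cx_mul_cumulative_sub hγ hS hτ hc hεS) (fun t ht x _ => ?_)
    (fun t ht x hx => ?_)
  · have ht₀ : 0 < t := half_pos hε.1 |>.trans ht.1
    exact hK.hasDerivAt_Cx_mul_cumulative_sub_eps x ht₀ (hS ⟨ht₀.le, ht.2.le⟩)
  · have ht₀ : 0 < t := half_pos hε.1 |>.trans ht.1
    have htS : t ∈ Icc 0 ε₀ := ⟨ht₀.le, ht.2.le⟩
    have hs : 0 ≤ τ / t := div_nonneg hτ.le ht₀.le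
    have hr : |-(τ * t⁻¹ ^ 2)| * exp (-(ρ * (τ / t))) ≤ τ * (ε / 2)⁻¹ ^ 2 := by
      refine (hK.abs_mul_exp_neg_le _ hs).trans ?_
      rw [abs_neg, abs_of_pos (by positivity)]
      gcongr; exacts [half_pos hε.1, ht.1.le]
    exact (abs_add_le _ _).trans ((add_le_add
      (hK.abs_mul_cumulative_sub_le (hM₁ t htS x hx.le) hx.le hs)
      (hK.abs_mul_comp_sub_le (hM₀ t htS x hx.le) hx.le hs hr)).trans_eq (by ring))

variable (hε₀ : 0 < ε₀)
include hε₀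

lemma tendsto_deriv_ff_tau :
    Tendsto (fun ε => ∫ x in Iio 0, Cx γ x c ε * (K (x - τ / ε) * ε⁻¹)) (𝓝[>] 0) (𝓝 0) := by
  obtain ⟨M, hM⟩ := exists_abs_Cx_le hγ hS hc
  refine hK.tendsto_integral_mul_comp_sub hτ (k := fun ε x => Cx γ x c ε) hε₀
    (continuous_Cx γ c) (fun ε hε => hM ε (Ioo_subset_Icc_self hε)) ?_
  simpa [mul_div_assoc] using tendsto_abs_inv_pow_mul_exp_neg_div (mul_pos hK.rate_pos hτ) 1

lemma tendsto_deriv_ff_c :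
    Tendsto (fun ε => ∫ x in Iio 0, CxDerivC γ x c ε * (cumulative K x - cumulative K (x - τ / ε)))
      (𝓝[>] 0) (𝓝 (1 / c ^ 2 * ∫ x in Iio 0, x * exp (x / c) * K x)) := by
  obtain ⟨M, hM⟩ := exists_abs_CxDerivC_le hγ hS hc
  rw [← hK.integral_CxDerivC_zero_mul_cumulative (γ := γ) hc]
  exact hK.tendsto_integral_mul_cumulative_sub hτ (k := fun ε x => CxDerivC γ x c ε) hε₀
    (continuous_CxDerivC γ c) (fun ε hε => hM ε (Ioo_subset_Icc_self hε) c (half_le_self hc.le))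
    fun x _ => (continuousAt_CxDerivC_zero x c).tendsto.mono_left nhdsWithin_le_nhds

lemma tendsto_deriv_ff_eps :
    Tendsto (fun ε =>
      (∫ x in Iio 0, CxDerivEps γ x c ε * (cumulative K x - cumulative K (x - τ / ε))) +
        ∫ x in Iio 0, Cx γ x c ε * (K (x - τ / ε) * -(τ * ε⁻¹ ^ 2)))
      (𝓝[>] 0) (𝓝 (2 * phiF K c - 1 / c * ∫ x in Iio 0, |x| * (exp (x / c) + 1) * K x)) := by
  obtain ⟨M₀, hM₀⟩ := exists_abs_Cx_le hγ hS hc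
  obtain ⟨M₁, hM₁⟩ := exists_abs_CxDerivEps_le hγ hS hc
  rw [← hK.integral_CxDerivEps_zero_mul_cumulative (γ := γ) hc, ← add_zero (∫ x in Iio 0, _)]
  have hr := (tendsto_abs_inv_pow_mul_exp_neg_div (mul_pos hK.rate_pos hτ) 2).const_mul τ
  rw [mul_zero] at hr
  refine (hK.tendsto_integral_mul_cumulative_sub hτ (k := fun ε x => CxDerivEps γ x c ε) hε₀
    (continuous_CxDerivEps γ c) (fun ε hε => hM₁ ε (Ioo_subset_Icc_self hε))
    fun x _ => (continuousAt_CxDerivEps_zero x c).tendsto.mono_left nhdsWithin_le_nhds).add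
    (hK.tendsto_integral_mul_comp_sub hτ (k := fun ε x => Cx γ x c ε) hε₀
      (continuous_Cx γ c) (fun ε hε => hM₀ ε (Ioo_subset_Icc_self hε)) (hr.congr fun ε => ?_))
  rw [abs_neg, abs_mul, abs_of_pos hτ, abs_pow, mul_div_assoc]
  ring

end SpeedIndex

end LeftExpDecay

theorem statement7_general (K : ℝ → ℝ)
    (hK : Continuous K)
    (hKdecay : ∃ α > (0:ℝ), ∃ ρ > (0:ℝ), ∀ x : ℝ, |K x| ≤ α * Real.exp (-ρ * |x|))
    (τ c γ : ℝ) (hτ : 0 < τ) (hc : 0 < c) (hγ : 0 < γ) :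
    ∃ ε₀ > (0:ℝ), ∃ dτ dc de : ℝ → ℝ,
      (∀ ε ∈ Ioo (0:ℝ) ε₀,
        HasDerivAt (fun τ' => ff K γ τ' c ε) (dτ ε) τ ∧
        HasDerivAt (fun c' => ff K γ τ c' ε) (dc ε) c ∧
        HasDerivAt (fun ε' => ff K γ τ c ε') (de ε) ε) ∧
      Tendsto dτ (𝓝[>] (0:ℝ)) (𝓝 0) ∧
      Tendsto dc (𝓝[>] (0:ℝ))
        (𝓝 ((1 / c ^ 2) * ∫ x in Iio (0:ℝ), x * Real.exp (x / c) * K x)) ∧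
      Tendsto de (𝓝[>] (0:ℝ))
        (𝓝 (2 * phiF K c - (1 / c) * ∫ x in Iio (0:ℝ), |x| * (Real.exp (x / c) + 1) * K x)) := by
  obtain ⟨α, -, ρ, hρ, hdecay⟩ := hKdecay
  have hK' : LeftExpDecay K α ρ :=
    ⟨hK, hρ, fun x hx => by simpa [abs_of_nonpos hx] using hdecay x⟩
  obtain ⟨ε₀, hε₀, hS⟩ := exists_Icc_subset_disc_pos γ
  exact ⟨ε₀, hε₀, _, _, _,
    fun ε hε => ⟨hK'.hasDerivAt_ff_tau hγ.le hS hτ hc hε, hK'.hasDerivAt_ff_c hγ.le hS hτ hc hε,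
      hK'.hasDerivAt_ff_eps hγ.le hS hτ hc hε⟩,
    hK'.tendsto_deriv_ff_tau hγ.le hS hτ hc hε₀, hK'.tendsto_deriv_ff_c hγ.le hS hτ hc hε₀,
    hK'.tendsto_deriv_ff_eps hγ.le hS hτ hc hε₀⟩

theorem statement7 (K : ℝ → ℝ)
    (hK : Continuous K)
    (hKdecay : ∃ α > (0:ℝ), ∃ ρ > (0:ℝ), ∀ x : ℝ, |K x| ≤ α * Real.exp (-ρ * |x|))
    (hKint : (∫ x : ℝ, K x) = 1)
    (τ c γ : ℝ) (hτ : 0 < τ) (hc : 0 < c) (hγ : 0 < γ) :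
    ∃ ε₀ > (0:ℝ), ∃ dτ dc de : ℝ → ℝ,
      (∀ ε ∈ Ioo (0:ℝ) ε₀,
        HasDerivAt (fun τ' => ff K γ τ' c ε) (dτ ε) τ ∧
        HasDerivAt (fun c' => ff K γ τ c' ε) (dc ε) c ∧
        HasDerivAt (fun ε' => ff K γ τ c ε') (de ε) ε) ∧
      Tendsto dτ (𝓝[>] (0:ℝ)) (𝓝 0) ∧
      Tendsto dc (𝓝[>] (0:ℝ))
        (𝓝 ((1 / c ^ 2) * ∫ x in Iio (0:ℝ), x * Real.exp (x / c) * K x)) ∧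
      Tendsto de (𝓝[>] (0:ℝ))
        (𝓝 (2 * phiF K c - (1 / c) * ∫ x in Iio (0:ℝ), |x| * (Real.exp (x / c) + 1) * K x)) :=
  statement7_general K hK hKdecay τ c γ hτ hc hγ
end
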